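/- arXiv:2204.07539 — 3 statements merged into one kernel-verified Lean document; each statement's English description precedes it below -/
import Mathlib

section
/- Let R, L, C > 0, let A = [[-1/(RC), 1/C], [-1/L, 0]] ∈ ℝ^{2×2}, let V_DC > 0 and B = (0, V_DC/(2L)) ∈ ℝ². Let P ∈ ℝ^{2×2} be symmetric and satisfy AᵀP + PA = -I. Let c ∈ ℝ with 0 ≤ c < 1, let γ : ℝ → ℝ satisfy |γ(t)| ≤ c for all t, and let e : ℝ → ℝ² be differentiable with e'(t) = A·e(t) + (u(t) - γ(t))·B, where u(t) = -sign(Bᵀ·P·e(t)) (with sign(s) = 1 if s ≥ 0 and sign(s) = -1 otherwise). Then for all t, the function V(t) = e(t)ᵀ·P·e(t) satisfies V'(t) ≤ -‖e(t)‖₂². -/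
/-!
Along a trajectory, `d/dt (eᵀPe) = eᵀ(AᵀP + PA)e + 2(u - γ)·BᵀPe = -‖e‖² + 2(u - γ)·BᵀPe`.
Since `|γ| < 1`, the factor `u - γ` has the sign of `u = -sign(BᵀPe)`, so the last term is
never positive.
-/

open Matrix

noncomputable def mySign (s : ℝ) : ℝ := if 0 ≤ s then 1 else -1

theorem neg_mySign_sub_mul_self_nonpos {g : ℝ} (hg : |g| ≤ 1) (s : ℝ) :
    (-mySign s - g) * s ≤ 0 := by
  obtain ⟨hg₁, hg₂⟩ := abs_le.mp hg
  unfold mySign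
  split_ifs with hs
  · nlinarith
  · nlinarith

section

variable {n : Type*} [Fintype n]

theorem hasDerivAt_dotProduct {e f : ℝ → n → ℝ} {e' f' : n → ℝ} {t : ℝ}
    (he : HasDerivAt e e' t) (hf : HasDerivAt f f' t) :
    HasDerivAt (fun s => e s ⬝ᵥ f s) (e' ⬝ᵥ f t + e t ⬝ᵥ f') t := by
  have := HasDerivAt.fun_sum (u := Finset.univ) fun i _ =>
    (hasDerivAt_pi.mp he i).fun_mul (hasDerivAt_pi.mp hf i)
  simpa only [dotProduct, ← Finset.sum_add_distrib] using this

theorem hasDerivAt_mulVec {e : ℝ → n → ℝ} {e' : n → ℝ} {t : ℝ} (P : Matrix n n ℝ)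
    (he : HasDerivAt e e' t) : HasDerivAt (fun s => P *ᵥ e s) (P *ᵥ e') t :=
  (mulVecLin P).toContinuousLinearMap.hasFDerivAt.comp_hasDerivAt t he

theorem dotProduct_mulVec_comm_of_transpose_eq {P : Matrix n n ℝ} (hP : Pᵀ = P)
    (x y : n → ℝ) : x ⬝ᵥ P *ᵥ y = y ⬝ᵥ P *ᵥ x := by
  rw [dotProduct_mulVec, ← mulVec_transpose, hP, dotProduct_comm]

theorem lyapunov_dotProduct_mulVec_eq_neg_dotProduct_self [DecidableEq n]
    {A P : Matrix n n ℝ} (hP : Aᵀ * P + P * A = -1) (x : n → ℝ) :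
    A *ᵥ x ⬝ᵥ P *ᵥ x + x ⬝ᵥ P *ᵥ (A *ᵥ x) = -(x ⬝ᵥ x) := by
  have := congrArg (fun M => x ⬝ᵥ M *ᵥ x) hP
  simpa only [add_mulVec, dotProduct_add, ← mulVec_mulVec, neg_mulVec, one_mulVec,
    dotProduct_neg, dotProduct_mulVec x Aᵀ, vecMul_transpose] using this

theorem hasDerivAt_dotProduct_mulVec_of_lyapunov [DecidableEq n] {A P : Matrix n n ℝ}
    (hPsymm : Pᵀ = P) (hP : Aᵀ * P + P * A = -1) {e : ℝ → n → ℝ} {w : n → ℝ} {t : ℝ}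
    (he : HasDerivAt e (A *ᵥ e t + w) t) :
    HasDerivAt (fun s => e s ⬝ᵥ P *ᵥ e s) (-(e t ⬝ᵥ e t) + 2 * (w ⬝ᵥ P *ᵥ e t)) t := by
  convert hasDerivAt_dotProduct he (hasDerivAt_mulVec P he) using 1
  rw [mulVec_add, dotProduct_add, add_dotProduct,
    dotProduct_mulVec_comm_of_transpose_eq hPsymm _ w,
    ← lyapunov_dotProduct_mulVec_eq_neg_dotProduct_self hP]
  ring

end

theorem stmt_4_general
    (A : Matrix (Fin 2) (Fin 2) ℝ)
    (B : Fin 2 → ℝ)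
    (P : Matrix (Fin 2) (Fin 2) ℝ) (hPsymm : Pᵀ = P)
    (hP : Aᵀ * P + P * A = -1)
    (c : ℝ) (hc1 : c < 1)
    (γ : ℝ → ℝ) (hγ : ∀ t, |γ t| ≤ c)
    (e : ℝ → Fin 2 → ℝ)
    (u : ℝ → ℝ) (hu : ∀ t, u t = -mySign (B ⬝ᵥ P.mulVec (e t)))
    (he : ∀ t, HasDerivAt e (A.mulVec (e t) + (u t - γ t) • B) t) :
    ∀ t, deriv (fun s => e s ⬝ᵥ P.mulVec (e s)) t ≤ -(e t ⬝ᵥ e t) := by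
  intro t
  rw [(hasDerivAt_dotProduct_mulVec_of_lyapunov hPsymm hP (he t)).deriv, smul_dotProduct,
    smul_eq_mul, hu t]
  have := neg_mySign_sub_mul_self_nonpos ((hγ t).trans hc1.le) (B ⬝ᵥ P *ᵥ e t)
  linarith

/-- Differential-inequality content of Theorem 1: for the half-bridge inverter error
dynamics `ė = A e + (u - γ)·B` with `A = [[-1/(RC), 1/C], [-1/L, 0]]`,
`B = (0, V_DC/(2L))`, disturbance `|γ(t)| ≤ c < 1`, symmetric `P` solving
`AᵀP + PA = -I`, and switching policy `u = -sign(BᵀPe)`, the Lyapunov function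
`V(t) = e(t)ᵀPe(t)` satisfies `V'(t) ≤ -‖e(t)‖₂²`. -/
theorem stmt_4 (R L C V_DC : ℝ) (hR : 0 < R) (hL : 0 < L) (hC : 0 < C)
    (hV : 0 < V_DC)
    (A : Matrix (Fin 2) (Fin 2) ℝ) (hA : A = !![-1/(R*C), 1/C; -1/L, 0])
    (B : Fin 2 → ℝ) (hB : B = ![0, V_DC/(2*L)])
    (P : Matrix (Fin 2) (Fin 2) ℝ) (hPsymm : Pᵀ = P)
    (hP : Aᵀ * P + P * A = -1)
    (c : ℝ) (hc0 : 0 ≤ c) (hc1 : c < 1)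
    (γ : ℝ → ℝ) (hγ : ∀ t, |γ t| ≤ c)
    (e : ℝ → Fin 2 → ℝ)
    (u : ℝ → ℝ) (hu : ∀ t, u t = -mySign (B ⬝ᵥ P.mulVec (e t)))
    (he : ∀ t, HasDerivAt e (A.mulVec (e t) + (u t - γ t) • B) t) :
    ∀ t, deriv (fun s => e s ⬝ᵥ P.mulVec (e s)) t ≤ -(e t ⬝ᵥ e t) :=
  stmt_4_general A B P hPsymm hP c hc1 γ hγ e u hu he
end

section
/- Let R, L, C > 0 and α > 0. Define A = [[-1/(RC), 1/C], [-1/L, 0]] ∈ ℝ^{2×2} and P = (α/2)·[[RC + RC²/L, -C], [-C, RL + L/R + RC]] ∈ ℝ^{2×2}. Then AᵀP + PA = -α·I. -/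
open Matrix

/-!
Writing `P = (α/2) • Q`, the Lyapunov operator `X ↦ AᵀX + XA` is linear, so it suffices that
`AᵀQ + QA = -2I`; this identity between explicit `2 × 2` matrices holds over any field once
`R`, `L`, `C` are invertible, and is checked entrywise.
-/

section HalfBridge

variable {K : Type*} [Field K]

def halfBridgeStateMatrix (R L C : K) : Matrix (Fin 2) (Fin 2) K :=
  !![-1/(R*C), 1/C; -1/L, 0]

def halfBridgeLyapunovMatrix (R L C : K) : Matrix (Fin 2) (Fin 2) K :=
  !![R*C + R*C^2/L, -C; -C, R*L + L/R + R*C]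

theorem halfBridge_lyapunov_eq {R L C : K} (hR : R ≠ 0) (hL : L ≠ 0) (hC : C ≠ 0) :
    (halfBridgeStateMatrix R L C)ᵀ * halfBridgeLyapunovMatrix R L C
      + halfBridgeLyapunovMatrix R L C * halfBridgeStateMatrix R L C = (-2 : K) • 1 := by
  ext i j
  fin_cases i <;> fin_cases j <;>
    simp [halfBridgeStateMatrix, halfBridgeLyapunovMatrix, mul_apply, one_apply] <;>
    field_simp <;> ring

end HalfBridge

theorem Matrix.lyapunov_smul {n R : Type*} [Fintype n] [CommRing R] {A Q M : Matrix n n R}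
    (h : Aᵀ * Q + Q * A = M) (c : R) : Aᵀ * (c • Q) + (c • Q) * A = c • M := by
  rw [mul_smul_comm, smul_mul_assoc, ← smul_add, h]

theorem stmt_6_general (R L C α : ℝ) (hR : 0 < R) (hL : 0 < L) (hC : 0 < C)
    (A P : Matrix (Fin 2) (Fin 2) ℝ)
    (hA : A = !![-1/(R*C), 1/C; -1/L, 0])
    (hP : P = (α/2) • !![R*C + R*C^2/L, -C; -C, R*L + L/R + R*C]) :
    Aᵀ * P + P * A = (-α) • (1 : Matrix (Fin 2) (Fin 2) ℝ) := by
  subst hA hP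
  refine (lyapunov_smul (halfBridge_lyapunov_eq hR.ne' hL.ne' hC.ne') (α / 2)).trans ?_
  rw [smul_smul]
  norm_num

/-- Explicit closed-form solution of the Lyapunov equation for the half-bridge
inverter: with `A = [[-1/(RC), 1/C], [-1/L, 0]]` and
`P = (α/2)·[[RC + RC²/L, -C], [-C, RL + L/R + RC]]`, one has `AᵀP + PA = -αI`. -/
theorem stmt_6 (R L C α : ℝ) (hR : 0 < R) (hL : 0 < L) (hC : 0 < C) (hα : 0 < α)
    (A P : Matrix (Fin 2) (Fin 2) ℝ)
    (hA : A = !![-1/(R*C), 1/C; -1/L, 0])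
    (hP : P = (α/2) • !![R*C + R*C^2/L, -C; -C, R*L + L/R + R*C]) :
    Aᵀ * P + P * A = (-α) • (1 : Matrix (Fin 2) (Fin 2) ℝ) :=
  stmt_6_general R L C α hR hL hC A P hA hP
end

section
/- Let R, L, C > 0 and α > 0. Then the matrix P = (α/2)·[[RC + RC²/L, -C], [-C, RL + L/R + RC]] ∈ ℝ^{2×2} is symmetric and positive definite. -/
open Matrix

/-!
In the expansion of `det P`, the product `(R C² / L) · (L / R) = C²` of two diagonal terms cancels
the square of the off-diagonal entry, leaving a sum of positive terms. A symmetric `2 × 2` matrix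
with positive corner entry and positive determinant is positive definite by completing the square.
-/

theorem Matrix.posDef_of_fin_two {a b c : ℝ} (ha : 0 < a) (hdet : b ^ 2 < a * c) :
    !![a, b; b, c].PosDef := by
  refine posDef_iff_dotProduct_mulVec.2 ⟨?_, fun x hx => ?_⟩
  · ext i j; fin_cases i <;> fin_cases j <;> rfl
  suffices 0 < x 0 * (a * x 0 + b * x 1) + x 1 * (b * x 0 + c * x 1) by
    simpa [dotProduct, mulVec, Fin.sum_univ_two]
  have hsq : a * (x 0 * (a * x 0 + b * x 1) + x 1 * (b * x 0 + c * x 1))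
      = (a * x 0 + b * x 1) ^ 2 + (a * c - b ^ 2) * x 1 ^ 2 := by ring
  refine pos_of_mul_pos_right (hsq ▸ ?_) ha.le
  rcases eq_or_ne (x 1) 0 with h1 | h1
  · have h0 : x 0 ≠ 0 := fun h0 => hx (funext fun i => by fin_cases i <;> simp [h0, h1])
    rw [h1, mul_zero, add_zero, zero_pow two_ne_zero, mul_zero, add_zero]
    positivity
  · exact add_pos_of_nonneg_of_pos (sq_nonneg _) (mul_pos (sub_pos.2 hdet) (by positivity))

/-- The explicit Lyapunov matrix `P = (α/2)·[[RC + RC²/L, -C], [-C, RL + L/R + RC]]`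
is symmetric and positive definite for all `R, L, C, α > 0`. -/
theorem stmt_7 (R L C α : ℝ) (hR : 0 < R) (hL : 0 < L) (hC : 0 < C) (hα : 0 < α)
    (P : Matrix (Fin 2) (Fin 2) ℝ)
    (hP : P = (α/2) • !![R*C + R*C^2/L, -C; -C, R*L + L/R + R*C]) :
    Pᵀ = P ∧ P.PosDef := by
  have hdiag : 0 < R*C + R*C^2/L := by positivity
  have hdet : (-C) ^ 2 < (R*C + R*C^2/L) * (R*L + L/R + R*C) := by
    have hexpand : (R*C + R*C^2/L) * (R*L + L/R + R*C) - (-C) ^ 2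
        = R^2*C*L + C*L + 2*(R*C)^2 + R^2*C^3/L := by
      field_simp
      ring
    have : 0 < R^2*C*L + C*L + 2*(R*C)^2 + R^2*C^3/L := by positivity
    linarith
  have hPD : P.PosDef := hP ▸ (posDef_of_fin_two hdiag hdet).smul (half_pos hα)
  exact ⟨by simpa using hPD.isHermitian.eq, hPD⟩
end
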